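/- Strong completeness of OL: every OL-consistent set of formulas of the static language is satisfiable in some pointed observational epistemic model (where each accessibility relation is Euclidean, transitive and serial, and no world verifies both obs_a p and obs_a ¬p). Consequently, a formula valid over observational epistemic models is a theorem of OL. -/

import Mathlib

/-- Atomic symbols: propositional atoms and observation atoms obs_a p (sign true)
    or obs_a ¬p (sign false). -/
inductive Atm (P A : Type) : Type
  | prop : P → Atm P A
  | obs  : A → P → Bool → Atm P A
deriving DecidableEq

/-- Static formulas of the language OL. -/
inductive Form (P A : Type) : Type
  | atom : Atm P A → Form P A
  | neg  : Form P A → Form P A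
  | and  : Form P A → Form P A → Form P A
  | bel  : A → Form P A → Form P A
deriving DecidableEq

def Form.imp {P A : Type} (φ ψ : Form P A) : Form P A := .neg (.and φ (.neg ψ))

/-- Kripke model with agents A and atoms Atm P A. -/
structure KModel (W P A : Type) where
  R : A → W → W → Prop
  V : Atm P A → W → Prop

/-- Satisfaction relation. -/
def sat {W P A : Type} (M : KModel W P A) : W → Form P A → Prop
  | w, .atom q => M.V q w
  | w, .neg φ => ¬ sat M w φ
  | w, .and φ ψ => sat M w φ ∧ sat M w ψ
  | w, .bel a φ => ∀ v, M.R a w v → sat M v φ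

def Euclid {α : Type} (R : α → α → Prop) : Prop := ∀ x y z, R x y → R x z → R y z
def Trans' {α : Type} (R : α → α → Prop) : Prop := ∀ x y z, R x y → R y z → R x z
def Serial {α : Type} (R : α → α → Prop) : Prop := ∀ x, ∃ y, R x y

/-- Observational epistemic model: each relation is Euclidean, transitive and
    serial, and no world verifies both obs_a p and obs_a ¬p. -/
def ObsModel {W P A : Type} (M : KModel W P A) : Prop :=
  (∀ a, Euclid (M.R a) ∧ Trans' (M.R a) ∧ Serial (M.R a)) ∧
  (∀ a p w, M.V (.obs a p true) w → ¬ M.V (.obs a p false) w)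

/-- Propositional evaluation treating modal/atomic formulas as atoms. -/
def propEval {P A : Type} (v : Form P A → Prop) : Form P A → Prop
  | .neg φ => ¬ propEval v φ
  | .and φ ψ => propEval v φ ∧ propEval v ψ
  | .atom q => v (.atom q)
  | .bel a φ => v (.bel a φ)

/-- Theorems of the axiom system OL: propositional tautologies, K, 4, 5, D for
    each B_a, the axiom Obs, modus ponens and necessitation. -/
inductive OLProof {P A : Type} : Form P A → Prop
  | taut {φ} : (∀ v, propEval v φ) → OLProof φ
  | axK {a φ ψ} : OLProof (.imp (.bel a (.imp φ ψ)) (.imp (.bel a φ) (.bel a ψ)))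
  | ax4 {a φ} : OLProof (.imp (.bel a φ) (.bel a (.bel a φ)))
  | ax5 {a φ} : OLProof (.imp (.neg (.bel a φ)) (.bel a (.neg (.bel a φ))))
  | axD {a φ} : OLProof (.imp (.bel a φ) (.neg (.bel a (.neg φ))))
  | axObs {a p} : OLProof (.imp (.atom (.obs a p true)) (.neg (.atom (.obs a p false))))
  | mp {φ ψ} : OLProof (.imp φ ψ) → OLProof φ → OLProof ψ
  | nec {a φ} : OLProof φ → OLProof (.bel a φ)

/-- Γ proves φ: some finite list of members of Γ implies φ. -/
def ProvesFrom {P A : Type} (Γ : Set (Form P A)) (φ : Form P A) : Prop :=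
  ∃ L : List (Form P A), (∀ ψ ∈ L, ψ ∈ Γ) ∧ OLProof (L.foldr Form.imp φ)

def OLConsistent {P A : Type} (Γ : Set (Form P A)) : Prop :=
  ¬ ∃ φ, ProvesFrom Γ φ ∧ ProvesFrom Γ (.neg φ)

/-- Maximal consistent set. -/
def MCS {P A : Type} (Γ : Set (Form P A)) : Prop :=
  OLConsistent Γ ∧ ∀ φ, φ ∈ Γ ∨ Form.neg φ ∈ Γ

/-- Worlds of the canonical model. -/
def CanW (P A : Type) : Type := {Γ : Set (Form P A) // MCS Γ}

/-- The canonical model of OL. -/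
def canonical (P A : Type) : KModel (CanW P A) P A where
  R a Δ₁ Δ₂ := ∀ ψ, Form.bel a ψ ∈ Δ₁.1 → ψ ∈ Δ₂.1
  V q Δ := Form.atom q ∈ Δ.1

/-! Canonical-model argument. Since `propEval` reads an iterated implication `L.foldr imp φ` as
"all of `L` imply `φ`", every structural fact about `ProvesFrom` (modus ponens, the deduction
theorem, compactness) is a propositional tautology; Lindenbaum's lemma then follows by Zorn.
In the canonical model, K and necessitation give the truth lemma, axioms 5, 4 and D make each
relation Euclidean, transitive and serial, and Obs forbids `obs_a p` and `obs_a ¬p` at one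
world. A non-theorem `φ` leaves `{¬φ}` consistent, so it fails in some observational model. -/

variable {P A : Type}

open Form

@[simp]
lemma propEval_imp (v : Form P A → Prop) (φ ψ : Form P A) :
    propEval v (φ.imp ψ) ↔ (propEval v φ → propEval v ψ) := by
  simp [propEval, Form.imp]

@[simp]
lemma propEval_foldr_imp (v : Form P A → Prop) (L : List (Form P A)) (φ : Form P A) :
    propEval v (L.foldr Form.imp φ) ↔ ((∀ x ∈ L, propEval v x) → propEval v φ) := by
  induction L with
  | nil => simp
  | cons x L ih => simp [ih]

namespace OLProof

lemma mp₂ {φ ψ χ : Form P A} (h : OLProof (φ.imp (ψ.imp χ))) (hφ : OLProof φ)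
    (hψ : OLProof ψ) : OLProof χ :=
  (h.mp hφ).mp hψ

lemma bel_foldr_imp (a : A) (L : List (Form P A)) (φ : Form P A) :
    OLProof ((bel a (L.foldr Form.imp φ)).imp
      ((L.map (bel a)).foldr Form.imp (bel a φ))) := by
  induction L with
  | nil => exact taut fun v => by simp
  | cons x L ih =>
    refine mp₂ (taut fun v => ?_) (axK (a := a) (φ := x) (ψ := L.foldr Form.imp φ)) ih
    simp only [List.foldr_cons, List.map_cons, propEval_imp]
    tauto

end OLProof

namespace ProvesFrom

variable {Γ Δ : Set (Form P A)} {φ ψ χ : Form P A}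

lemma of_mem (h : φ ∈ Γ) : ProvesFrom Γ φ :=
  ⟨[φ], by simpa using h, .taut fun v => by simp⟩

lemma of_olProof (h : OLProof φ) : ProvesFrom Γ φ :=
  ⟨[], by simp, h⟩

lemma mono (hΓΔ : Γ ⊆ Δ) : ProvesFrom Γ φ → ProvesFrom Δ φ
  | ⟨L, hL, p⟩ => ⟨L, fun x hx => hΓΔ (hL x hx), p⟩

lemma exists_finite (h : ProvesFrom Γ φ) : ∃ s ⊆ Γ, s.Finite ∧ ProvesFrom s φ := by
  obtain ⟨L, hL, p⟩ := h
  exact ⟨{x | x ∈ L}, hL, L.finite_toSet, L, fun _ => id, p⟩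

lemma mp (hφψ : ProvesFrom Γ (φ.imp ψ)) (hφ : ProvesFrom Γ φ) : ProvesFrom Γ ψ := by
  obtain ⟨L₁, hL₁, p₁⟩ := hφψ
  obtain ⟨L₂, hL₂, p₂⟩ := hφ
  refine ⟨L₁ ++ L₂, by simpa [or_imp, forall_and] using ⟨hL₁, hL₂⟩, ?_⟩
  refine OLProof.mp₂ (.taut fun v => ?_) p₁ p₂
  simp only [propEval_imp, propEval_foldr_imp, List.forall_mem_append]
  tauto

lemma of_imp (h : OLProof (φ.imp ψ)) (hφ : ProvesFrom Γ φ) : ProvesFrom Γ ψ :=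
  (of_olProof h).mp hφ

lemma of_imp₂ (h : OLProof (φ.imp (ψ.imp χ))) (hφ : ProvesFrom Γ φ) (hψ : ProvesFrom Γ ψ) :
    ProvesFrom Γ χ :=
  (of_imp h hφ).mp hψ

/-- The deduction theorem: the premises different from `χ` already prove `χ → ψ`. -/
lemma deduction (h : ProvesFrom (insert χ Γ) ψ) : ProvesFrom Γ (χ.imp ψ) := by
  classical
  obtain ⟨L, hL, p⟩ := h
  refine ⟨L.filter (· ≠ χ), fun x hx => ?_, (OLProof.taut fun v => ?_).mp p⟩
  · obtain ⟨hxL, hxχ⟩ : x ∈ L ∧ x ≠ χ := by simpa using hx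
    exact (hL x hxL).resolve_left hxχ
  · simp only [propEval_imp, propEval_foldr_imp, List.mem_filter, decide_eq_true_eq]
    intro hψ hL' hχ
    refine hψ fun x hx => ?_
    by_cases hxχ : x = χ
    · exact hxχ ▸ hχ
    · exact hL' x ⟨hx, hxχ⟩

lemma nec (a : A) (h : ProvesFrom Γ φ) : ProvesFrom (bel a '' Γ) (bel a φ) := by
  obtain ⟨L, hL, p⟩ := h
  refine ⟨L.map (Form.bel a), ?_, (OLProof.bel_foldr_imp a L φ).mp (.nec p)⟩
  simpa using hL

lemma olProof_of_empty (h : ProvesFrom ∅ φ) : OLProof φ := by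
  obtain ⟨L, hL, p⟩ := h
  rwa [List.eq_nil_iff_forall_not_mem.2 hL] at p

end ProvesFrom

section Consistency

variable {Γ : Set (Form P A)} {φ χ : Form P A}

lemma provesFrom_neg_of_not_olConsistent_insert (h : ¬ OLConsistent (insert χ Γ)) :
    ProvesFrom Γ χ.neg := by
  obtain ⟨φ, hφ, hnφ⟩ := not_not.1 h
  exact .of_imp₂ (.taut fun v => by simp +contextual [propEval]) hφ.deduction hnφ.deduction

lemma olConsistent_singleton_neg (h : ¬ OLProof φ) : OLConsistent {φ.neg} := by
  refine fun hφ => h ?_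
  have := provesFrom_neg_of_not_olConsistent_insert (Γ := ∅) (χ := φ.neg)
    (by rw [insert_empty_eq]; exact not_not.2 hφ)
  exact (OLProof.taut fun v => by simp [propEval]).mp this.olProof_of_empty

lemma olConsistent_sUnion_of_isChain {c : Set (Set (Form P A))}
    (hc : ∀ Δ ∈ c, OLConsistent Δ) (hchain : IsChain (· ⊆ ·) c) (hne : c.Nonempty) :
    OLConsistent (⋃₀ c) := by
  rintro ⟨φ, hφ, hnφ⟩
  obtain ⟨s₁, hs₁, hs₁fin, hφ⟩ := hφ.exists_finite
  obtain ⟨s₂, hs₂, hs₂fin, hnφ⟩ := hnφ.exists_finite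
  obtain ⟨Δ, hΔ, hsΔ⟩ := hchain.directedOn.exists_mem_subset_of_finite_of_subset_sUnion hne
    (hs₁fin.union hs₂fin) (Set.union_subset hs₁ hs₂)
  exact hc Δ hΔ ⟨φ, hφ.mono (Set.subset_union_left.trans hsΔ),
    hnφ.mono (Set.subset_union_right.trans hsΔ)⟩

/-- Lindenbaum's lemma. -/
lemma exists_mcs_superset (hΓ : OLConsistent Γ) : ∃ Δ, Γ ⊆ Δ ∧ MCS Δ := by
  obtain ⟨Δ, hΓΔ, hΔ⟩ := zorn_subset_nonempty {Δ : Set (Form P A) | OLConsistent Δ}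
    (fun c hc hchain hne => ⟨⋃₀ c, olConsistent_sUnion_of_isChain hc hchain hne,
      fun _ => Set.subset_sUnion_of_mem⟩) Γ hΓ
  have provesFrom_neg_of_not_mem {φ : Form P A} (hφ : φ ∉ Δ) : ProvesFrom Δ φ.neg :=
    provesFrom_neg_of_not_olConsistent_insert fun hcons =>
      hφ (hΔ.2 hcons (Set.subset_insert φ Δ) (Set.mem_insert φ Δ))
  refine ⟨Δ, hΓΔ, hΔ.1, fun φ => ?_⟩
  by_contra! ⟨hφ, hnφ⟩
  exact hΔ.1 ⟨φ.neg, provesFrom_neg_of_not_mem hφ, provesFrom_neg_of_not_mem hnφ⟩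

end Consistency

def belSet (a : A) (Γ : Set (Form P A)) : Set (Form P A) := {ψ | bel a ψ ∈ Γ}

namespace MCS

variable {Γ : Set (Form P A)} (hΓ : MCS Γ) {a : A} {φ ψ : Form P A}
include hΓ

lemma mem_of_provesFrom (h : ProvesFrom Γ φ) : φ ∈ Γ :=
  (hΓ.2 φ).resolve_right fun hn => hΓ.1 ⟨φ, h, .of_mem hn⟩

lemma mem_of_imp (h : OLProof (ψ.imp φ)) (hψ : ψ ∈ Γ) : φ ∈ Γ :=
  hΓ.mem_of_provesFrom (.of_imp h (.of_mem hψ))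

lemma neg_mem_iff : φ.neg ∈ Γ ↔ φ ∉ Γ :=
  ⟨fun hn h => hΓ.1 ⟨φ, .of_mem h, .of_mem hn⟩, (hΓ.2 φ).resolve_left⟩

lemma and_mem_iff : φ.and ψ ∈ Γ ↔ φ ∈ Γ ∧ ψ ∈ Γ :=
  ⟨fun h => ⟨hΓ.mem_of_imp (.taut fun v => by simp +contextual [propEval]) h,
      hΓ.mem_of_imp (.taut fun v => by simp +contextual [propEval]) h⟩,
    fun ⟨hφ, hψ⟩ => hΓ.mem_of_provesFrom
      (.of_imp₂ (.taut fun v => by simp +contextual [propEval]) (.of_mem hφ) (.of_mem hψ))⟩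

lemma bel_mem_of_provesFrom_belSet (h : ProvesFrom (belSet a Γ) φ) : bel a φ ∈ Γ :=
  hΓ.mem_of_provesFrom <| (h.nec a).mono <| by rintro _ ⟨ψ, hψ, rfl⟩; exact hψ

lemma olConsistent_belSet : OLConsistent (belSet a Γ) := by
  rintro ⟨φ, hφ, hnφ⟩
  have hB := hΓ.bel_mem_of_provesFrom_belSet hφ
  exact (hΓ.neg_mem_iff.1 (hΓ.mem_of_imp .axD hB)) (hΓ.bel_mem_of_provesFrom_belSet hnφ)

lemma exists_mcs_belSet_subset_of_bel_not_mem (h : bel a φ ∉ Γ) :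
    ∃ Δ, belSet a Γ ⊆ Δ ∧ MCS Δ ∧ φ ∉ Δ := by
  have hcons : OLConsistent (insert φ.neg (belSet a Γ)) := fun hincons =>
    h <| hΓ.bel_mem_of_provesFrom_belSet <| .of_imp (.taut fun v => by simp [propEval])
      (provesFrom_neg_of_not_olConsistent_insert (not_not_intro hincons))
  obtain ⟨Δ, hsub, hΔ⟩ := exists_mcs_superset hcons
  exact ⟨Δ, (Set.subset_insert _ _).trans hsub, hΔ,
    hΔ.neg_mem_iff.1 (hsub (Set.mem_insert _ _))⟩

end MCS

lemma sat_canonical_iff (φ : Form P A) (Δ : CanW P A) :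
    sat (canonical P A) Δ φ ↔ φ ∈ Δ.1 := by
  induction φ generalizing Δ with
  | atom q => rfl
  | neg φ ih => rw [sat, ih, Δ.2.neg_mem_iff]
  | and φ ψ ihφ ihψ => rw [sat, ihφ, ihψ, Δ.2.and_mem_iff]
  | bel a φ ih =>
    refine ⟨fun hsat => ?_, fun hφ Δ' hR => (ih Δ').2 (hR φ hφ)⟩
    by_contra hφ
    obtain ⟨Δ', hsub, hΔ', hφΔ'⟩ := Δ.2.exists_mcs_belSet_subset_of_bel_not_mem hφ
    exact hφΔ' ((ih ⟨Δ', hΔ'⟩).1 (hsat ⟨Δ', hΔ'⟩ hsub))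

lemma obsModel_canonical : ObsModel (canonical P A) := by
  refine ⟨fun a => ⟨?euclid, ?trans, ?serial⟩, ?obs⟩
  case euclid =>
    intro Δ₁ Δ₂ Δ₃ h₁₂ h₁₃ ψ hψ
    by_contra hψ₃
    have h5 := Δ₁.2.mem_of_imp .ax5 (Δ₁.2.neg_mem_iff.2 fun hB => hψ₃ (h₁₃ ψ hB))
    exact Δ₂.2.neg_mem_iff.1 (h₁₂ _ h5) hψ
  case trans =>
    exact fun Δ₁ Δ₂ Δ₃ h₁₂ h₂₃ ψ hψ => h₂₃ ψ (h₁₂ _ (Δ₁.2.mem_of_imp .ax4 hψ))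
  case serial =>
    intro Δ
    obtain ⟨Δ', hsub, hΔ'⟩ := exists_mcs_superset (Δ.2.olConsistent_belSet (a := a))
    exact ⟨⟨Δ', hΔ'⟩, hsub⟩
  case obs =>
    exact fun a p Δ htrue => Δ.2.neg_mem_iff.1 (Δ.2.mem_of_imp .axObs htrue)

theorem exists_obsModel_sat_of_consistent {Γ : Set (Form P A)} (hΓ : OLConsistent Γ) :
    ∃ (W : Type) (M : KModel W P A) (w : W), ObsModel M ∧ ∀ φ ∈ Γ, sat M w φ := by
  obtain ⟨Δ, hsub, hΔ⟩ := exists_mcs_superset hΓ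
  exact ⟨CanW P A, canonical P A, ⟨Δ, hΔ⟩, obsModel_canonical,
    fun φ hφ => (sat_canonical_iff φ ⟨Δ, hΔ⟩).2 (hsub hφ)⟩

theorem olProof_of_valid {φ : Form P A}
    (h : ∀ (W : Type) (M : KModel W P A) (w : W), ObsModel M → sat M w φ) : OLProof φ := by
  by_contra hφ
  obtain ⟨W, M, w, hM, hsat⟩ :=
    exists_obsModel_sat_of_consistent (olConsistent_singleton_neg hφ)
  exact hsat φ.neg rfl (h W M w hM)

/-- strong completeness of OL: every consistent set is satisfiable
    in a pointed observational epistemic model; consequently every formula valid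
    over observational epistemic models is a theorem of OL. -/
theorem stmt12 {P A : Type} :
    (∀ Γ : Set (Form P A), OLConsistent Γ →
      ∃ (W : Type) (M : KModel W P A) (w : W), ObsModel M ∧ ∀ φ ∈ Γ, sat M w φ) ∧
    (∀ φ : Form P A,
      (∀ (W : Type) (M : KModel W P A) (w : W), ObsModel M → sat M w φ) →
      OLProof φ) :=
  ⟨fun _ => exists_obsModel_sat_of_consistent, fun _ => olProof_of_valid⟩
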